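/- For every positive integer n there exists an integer N such that every connected graph G with vertex cover number at least N contains an induced subgraph isomorphic to P_n, K_n, K_{n,n}, S_n^2, or F_n. -/

import Mathlib

open SimpleGraph Finset

/-- An independent set: pairwise non-adjacent vertices. -/
def IsIndepSet {V : Type*} (G : SimpleGraph V) (s : Set V) : Prop :=
  s.Pairwise fun a b => ¬ G.Adj a b

/-- `v` is a cut-vertex of `G`: deleting `v` increases the number of connected components. -/
def IsCutVertex {V : Type*} (G : SimpleGraph V) (v : V) : Prop :=
  Nat.card G.ConnectedComponent < Nat.card (G.induce {v}ᶜ).ConnectedComponent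

/-- `G` contains an induced subgraph isomorphic to `H`. -/
def HasInducedCopy {V W : Type*} (G : SimpleGraph V) (H : SimpleGraph W) : Prop :=
  ∃ s : Set V, Nonempty (H ≃g G.induce s)

/-- `H_n^1`: the complete graph on `Fin n` (the `Sum.inl` part) with a pendant vertex
(`Sum.inr i`) attached to each clique vertex `Sum.inl i`. -/
def Hgraph1 (n : ℕ) : SimpleGraph (Fin n ⊕ Fin n) :=
  SimpleGraph.fromRel (fun a b => match a, b with
    | Sum.inl _, Sum.inl _ => True
    | Sum.inl i, Sum.inr j => i = j
    | _, _ => False)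

/-- `H_n^2`: the complete graph on `Fin n` with a path of length 2 attached to each
clique vertex: `Sum.inl i` — `Sum.inr (Sum.inl i)` — `Sum.inr (Sum.inr i)`. -/
def Hgraph2 (n : ℕ) : SimpleGraph (Fin n ⊕ (Fin n ⊕ Fin n)) :=
  SimpleGraph.fromRel (fun a b => match a, b with
    | Sum.inl _, Sum.inl _ => True
    | Sum.inl i, Sum.inr (Sum.inl j) => i = j
    | Sum.inr (Sum.inl i), Sum.inr (Sum.inr j) => i = j
    | _, _ => False)

/-- `T_n`: the complete graph on `Fin n` with a triangle attached at each clique vertex. -/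
def Tgraph (n : ℕ) : SimpleGraph (Fin n ⊕ (Fin n ⊕ Fin n)) :=
  SimpleGraph.fromRel (fun a b => match a, b with
    | Sum.inl _, Sum.inl _ => True
    | Sum.inl i, Sum.inr (Sum.inl j) => i = j
    | Sum.inl i, Sum.inr (Sum.inr j) => i = j
    | Sum.inr (Sum.inl i), Sum.inr (Sum.inr j) => i = j
    | _, _ => False)

/-- `S_n^2`: the spider with `n` legs of length 2 (center `Sum.inl ()`). -/
def Sgraph2 (n : ℕ) : SimpleGraph (Unit ⊕ (Fin n ⊕ Fin n)) :=
  SimpleGraph.fromRel (fun a b => match a, b with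
    | Sum.inl _, Sum.inr (Sum.inl _) => True
    | Sum.inr (Sum.inl i), Sum.inr (Sum.inr j) => i = j
    | _, _ => False)

/-- `F_n`: `n` triangles sharing exactly one common vertex (the center `Sum.inl ()`). -/
def Fgraph (n : ℕ) : SimpleGraph (Unit ⊕ (Fin n ⊕ Fin n)) :=
  SimpleGraph.fromRel (fun a b => match a, b with
    | Sum.inl _, Sum.inr _ => True
    | Sum.inr (Sum.inl i), Sum.inr (Sum.inr j) => i = j
    | _, _ => False)

/-- The matching number of `G`. -/
noncomputable def matchNum {V : Type*} (G : SimpleGraph V) : ℕ :=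
  sSup {k | ∃ M : G.Subgraph, M.IsMatching ∧ M.edgeSet.ncard = k}

/-- The vertex cover number of `G`. -/
noncomputable def coverNum {V : Type*} (G : SimpleGraph V) : ℕ :=
  sInf {k | ∃ s : Set V, (∀ ⦃u w⦄, G.Adj u w → u ∈ s ∨ w ∈ s) ∧ s.ncard = k}

/-!
If two vertices of `G` are at distance at least `n - 1`, a shortest path between them is an
induced `P_n`. Otherwise the large vertex cover number yields many pairwise disjoint edges, and by
pigeonhole many of them, `x i — y i`, have `x i` at the same distance `d < n - 1` from a fixed
vertex. Among the neighbours of the `x i` one level closer, either one vertex `u` is adjacent to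
many `x i`, which gives a (not necessarily induced) spider with centre `u` and many legs
`u — x i — y i`, or there are many distinct ones, which gives many disjoint edges one level lower;
as `d` is bounded, a spider with many legs appears. Ramsey's theorem for the `16` adjacency
patterns between two legs, and pigeonhole for whether `u` sees the `y i`, make all legs alike.
Then the `x i` or the `y i` form a clique `K_n`, or a half graph between them contains `K_{n,n}`,
or the legs form an induced matching, which together with `u` is an induced `S_n^2` or `F_n`.
-/

theorem hasInducedCopy_iff_isIndContained {V W : Type*} {G : SimpleGraph V}
    {H : SimpleGraph W} : HasInducedCopy G H ↔ H ⊴ G :=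
  isIndContained_iff_exists_iso_induce.symm

theorem Finset.exists_orderEmbedding_fin_mem {α : Type*} [LinearOrder α] {s : Finset α} {q : ℕ}
    (h : q ≤ s.card) : ∃ e : Fin q ↪o α, ∀ j, e j ∈ s := by
  obtain ⟨t, hts, ht⟩ := Finset.exists_subset_card_eq h
  exact ⟨t.orderEmbOfFin ht, fun j => hts (t.orderEmbOfFin_mem ht j)⟩

theorem Fin.exists_orderEmbedding_comp_eq_of_card_mul_le {β : Type*} {m q : ℕ}
    (f : Fin m → β) {t : Finset β} (ht : t.Nonempty) (hf : ∀ i, f i ∈ t) (h : t.card * q ≤ m) :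
    ∃ b ∈ t, ∃ e : Fin q ↪o Fin m, ∀ j, f (e j) = b := by
  classical
  obtain ⟨b, hbt, hb⟩ := Finset.exists_le_card_fiber_of_mul_le_card_of_maps_to
    (s := Finset.univ) (fun i _ => hf i) ht (by simpa using h)
  obtain ⟨e, he⟩ := Finset.exists_orderEmbedding_fin_mem hb
  exact ⟨b, hbt, e, fun j => (Finset.mem_filter.mp (he j)).2⟩

theorem exists_fin_injective_comp_of_le_card_image {α β : Type*} [Fintype α] [DecidableEq β]
    (f : α → β) {m : ℕ} (h : m ≤ (Finset.univ.image f).card) :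
    ∃ e : Fin m → α, Function.Injective (f ∘ e) := by
  obtain ⟨t, hts, ht⟩ := Finset.exists_subset_card_eq h
  have (j : Fin m) : ∃ a, f a = (t.equivFinOfCardEq ht).symm j := by
    simpa using hts ((t.equivFinOfCardEq ht).symm j).2
  choose e he using this
  exact ⟨e, fun a b hab => by simpa [he] using hab⟩

theorem exists_chain_of_pow_le_card {α C : Type*} [Fintype C] (hC : 2 ≤ Fintype.card C)
    (c : α → α → C) (m : ℕ) (S : Finset α) (hS : Fintype.card C ^ m ≤ S.card) :
    ∃ (v : Fin m → α) (k : Fin m → C), Function.Injective v ∧ (∀ i, v i ∈ S) ∧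
      ∀ i j, i < j → c (v i) (v j) = k i := by
  classical
  induction m generalizing S with
  | zero => exact ⟨Fin.elim0, Fin.elim0, isEmptyElim, isEmptyElim, isEmptyElim⟩
  | succ m ih =>
    have hpow : 1 ≤ Fintype.card C ^ m := Nat.one_le_pow _ _ (by omega)
    have hpow_succ : Fintype.card C ^ (m + 1) = Fintype.card C * Fintype.card C ^ m :=
      pow_succ' _ _
    have htwo : 2 * Fintype.card C ^ m ≤ Fintype.card C * Fintype.card C ^ m :=
      Nat.mul_le_mul_right _ hC
    obtain ⟨x, hxS⟩ : S.Nonempty := Finset.card_pos.mp (by nlinarith)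
    obtain ⟨k₀, -, hk₀⟩ := Finset.exists_lt_card_fiber_of_mul_lt_card_of_maps_to
      (s := S.erase x) (t := Finset.univ) (n := Fintype.card C ^ m - 1) (f := c x)
      (fun _ _ => Finset.mem_univ _) (by
        rw [Finset.card_univ, Finset.card_erase_of_mem hxS, Nat.mul_sub, mul_one]
        omega)
    obtain ⟨v, k, hv, hvS, hvk⟩ := ih ((S.erase x).filter fun y => c x y = k₀) (by omega)
    have hvS' (i : Fin m) : v i ∈ S.erase x ∧ c x (v i) = k₀ := Finset.mem_filter.mp (hvS i)
    refine ⟨Fin.cons x v, Fin.cons k₀ k, Fin.cons_injective_iff.mpr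
      ⟨fun ⟨i, hi⟩ => Finset.ne_of_mem_erase (hvS' i).1 hi, hv⟩,
      Fin.cases hxS fun i => Finset.mem_of_mem_erase (hvS' i).1, ?_⟩
    intro i j hij
    induction j using Fin.cases with
    | zero => exact absurd hij (Fin.not_lt_zero i)
    | succ j =>
      induction i using Fin.cases with
      | zero => simpa using (hvS' j).2
      | succ i => simpa using hvk i j (Fin.succ_lt_succ_iff.mp hij)

theorem exists_monochromatic_of_pow_le_card {α C : Type*} [Fintype α] [Fintype C]
    (hC : 2 ≤ Fintype.card C) (c : α → α → C) (t : ℕ)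
    (hα : Fintype.card C ^ (Fintype.card C * t) ≤ Fintype.card α) :
    ∃ (e : Fin t → α) (k : C), Function.Injective e ∧ ∀ a b, a < b → c (e a) (e b) = k := by
  obtain ⟨v, k, hv, -, hvk⟩ := exists_chain_of_pow_le_card hC c _ Finset.univ hα
  obtain ⟨k₀, -, e, he⟩ := Fin.exists_orderEmbedding_comp_eq_of_card_mul_le k
    (Finset.univ_nonempty_iff.mpr (Fintype.card_pos_iff.mp (by omega)))
    (fun _ => Finset.mem_univ _) (by rw [Finset.card_univ])
  exact ⟨v ∘ e, k₀, hv.comp e.injective, fun a b hab => by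
    simp only [Function.comp_apply, hvk _ _ (e.strictMono hab), he]⟩

namespace SimpleGraph

variable {V W ι κ : Type*} {G : SimpleGraph V}

theorem isIndContained_of_injective {H : SimpleGraph W} (f : W → V) (hf : Function.Injective f)
    (hadj : ∀ a b, G.Adj (f a) (f b) ↔ H.Adj a b) : H ⊴ G :=
  ⟨⟨⟨f, hf⟩, hadj _ _⟩⟩

theorem top_isIndContained_of_forall_lt_adj {n : ℕ} {f : Fin n → V}
    (h : ∀ a b, a < b → G.Adj (f a) (f b)) : (⊤ : SimpleGraph (Fin n)) ⊴ G := by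
  have hadj (a b : Fin n) (hab : a ≠ b) : G.Adj (f a) (f b) :=
    hab.lt_or_gt.elim (h a b) fun hba => (h b a hba).symm
  refine isIndContained_of_injective f (fun a b hab => ?_) fun a b =>
    ⟨fun hG hab => hG.ne (congrArg f hab), hadj a b⟩
  by_contra hne
  exact (hadj a b hne).ne hab

theorem completeBipartiteGraph_isIndContained {α β : Type*} {x : α → V} {y : β → V}
    (hx : Function.Injective x) (hy : Function.Injective y) (hxx : ∀ a b, ¬ G.Adj (x a) (x b))
    (hyy : ∀ a b, ¬ G.Adj (y a) (y b)) (hxy : ∀ a b, G.Adj (x a) (y b)) :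
    completeBipartiteGraph α β ⊴ G :=
  isIndContained_of_injective (Sum.elim x y) (hx.sumElim hy fun a b => (hxy a b).ne) <| by
    rintro (a | a) (b | b) <;> simp [hxx, hyy, hxy, (hxy _ _).symm]

theorem forall_not_adj_of_forall_lt {t : ℕ} {f : Fin t → V}
    (h : ∀ a b, a < b → ¬ G.Adj (f a) (f b)) (a b : Fin t) : ¬ G.Adj (f a) (f b) := by
  rcases lt_trichotomy a b with hab | rfl | hab
  · exact h a b hab
  · exact G.irrefl
  · exact fun hadj => h b a hab hadj.symm

theorem Walk.dist_getVert_of_length_eq_dist {u v : V} {p : G.Walk u v}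
    (hp : p.length = G.dist u v) {i : ℕ} (hi : i ≤ p.length) : G.dist u (p.getVert i) = i := by
  rw [← length_eq_dist_of_subwalk hp (p.isSubwalk_take i), Walk.take_length]
  exact min_eq_left hi

theorem pathGraph_isIndContained_of_le_dist {n : ℕ} {x y : V} (hr : G.Reachable x y)
    (h : n - 1 ≤ G.dist x y) : pathGraph n ⊴ G := by
  obtain ⟨p, hp⟩ := hr.exists_walk_length_eq_dist
  have hlen (a : Fin n) : (a : ℕ) ≤ p.length := by omega
  have hdist (a : Fin n) : G.dist x (p.getVert a) = a :=
    p.dist_getVert_of_length_eq_dist hp (hlen a)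
  refine isIndContained_of_injective (fun a : Fin n => p.getVert a) (fun a b hab => ?_)
    fun a b => ⟨fun hadj => ?_, fun hab => ?_⟩
  · exact Fin.ext (by simpa only [hdist] using congrArg (G.dist x) hab)
  · have hne : (a : ℕ) ≠ b := fun h => hadj.ne (by simp only [h])
    have := hadj.diff_dist_adj (u := x)
    rw [hdist, hdist] at this
    rw [pathGraph_adj]
    omega
  · rw [pathGraph_adj] at hab
    rcases hab with hab | hab
    · simpa only [← hab] using p.adj_getVert_succ (by have := hlen b; omega)
    · simpa only [← hab] using (p.adj_getVert_succ (by have := hlen a; omega)).symm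

theorem exists_adj_dist_eq_of_dist_eq_succ {r x : V} {d : ℕ} (hd : G.dist r x = d + 1) :
    ∃ p, G.Adj p x ∧ G.dist r p = d := by
  obtain ⟨w, hw⟩ :=
    (Reachable.of_dist_ne_zero (show G.dist r x ≠ 0 by omega)).exists_walk_length_eq_dist
  refine ⟨w.getVert d, ?_, w.dist_getVert_of_length_eq_dist hw (by omega)⟩
  simpa only [w.getVert_of_length_le (i := d + 1) (by omega)] using
    w.adj_getVert_succ (i := d) (by omega)

theorem coverNum_le_ncard {s : Set V} (hs : G.IsVertexCover s) : coverNum G ≤ s.ncard :=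
  Nat.sInf_le ⟨s, hs, rfl⟩

structure IsDisjointEdges (G : SimpleGraph V) (x y : ι → V) : Prop where
  injective_left : Function.Injective x
  injective_right : Function.Injective y
  left_ne_right : ∀ i j, x i ≠ y j
  adj : ∀ i, G.Adj (x i) (y i)

/-- The paths `u — x i — y i` form a spider with centre `u`, not necessarily induced. -/
structure IsSpider (G : SimpleGraph V) (u : V) (x y : ι → V) : Prop
    extends IsDisjointEdges G x y where
  adj_center : ∀ i, G.Adj u (x i)
  center_ne_right : ∀ i, u ≠ y i

theorem IsDisjointEdges.comp {x y : ι → V} (h : IsDisjointEdges G x y) {e : κ → ι}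
    (he : Function.Injective e) : IsDisjointEdges G (x ∘ e) (y ∘ e) :=
  ⟨h.injective_left.comp he, h.injective_right.comp he, fun _ _ => h.left_ne_right _ _,
    fun _ => h.adj _⟩

theorem IsSpider.comp {u : V} {x y : ι → V} (h : IsSpider G u x y) {e : κ → ι}
    (he : Function.Injective e) : IsSpider G u (x ∘ e) (y ∘ e) :=
  ⟨h.toIsDisjointEdges.comp he, fun _ => h.adj_center _, fun _ => h.center_ne_right _⟩

theorem exists_isDisjointEdges_of_le_coverNum (M : ℕ) (h : 2 * M ≤ coverNum G) :
    ∃ x y : Fin M → V, IsDisjointEdges G x y := by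
  induction M with
  | zero => exact ⟨Fin.elim0, Fin.elim0, isEmptyElim, isEmptyElim, isEmptyElim, isEmptyElim⟩
  | succ M ih =>
    obtain ⟨x, y, hxy⟩ := ih (by omega)
    have hcard : (Set.range x ∪ Set.range y).ncard < coverNum G := by
      have := Set.ncard_union_le (Set.range x) (Set.range y)
      rw [Set.ncard_range_of_injective hxy.injective_left,
        Set.ncard_range_of_injective hxy.injective_right, Nat.card_fin] at this
      omega
    obtain ⟨u, w, huw, hu, hw⟩ : ∃ u w, G.Adj u w ∧ u ∉ Set.range x ∪ Set.range y ∧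
        w ∉ Set.range x ∪ Set.range y := by
      by_contra! hcover
      exact (coverNum_le_ncard fun u w huw => or_iff_not_imp_left.mpr (hcover u w huw)).not_gt
        hcard
    simp only [Set.mem_union, Set.mem_range, not_or, not_exists] at hu hw
    refine ⟨Fin.cons u x, Fin.cons w y, ⟨Fin.cons_injective_iff.mpr ?_,
      Fin.cons_injective_iff.mpr ?_, fun i j => ?_, Fin.cases huw hxy.adj⟩⟩
    · exact ⟨fun ⟨i, hi⟩ => hu.1 i hi, hxy.injective_left⟩
    · exact ⟨fun ⟨i, hi⟩ => hw.2 i hi, hxy.injective_right⟩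
    · induction i using Fin.cases <;> induction j using Fin.cases <;>
        simp only [Fin.cons_zero, Fin.cons_succ]
      · exact huw.ne
      · exact fun h => hu.2 _ h.symm
      · exact hw.1 _
      · exact hxy.left_ne_right _ _

theorem IsDisjointEdges.exists_isSpider_of_adj {q K : ℕ} {x y : Fin q → V}
    (h : IsDisjointEdges G x y) {u : V} {I : Finset (Fin q)} (hu : ∀ i ∈ I, G.Adj u (x i))
    (hI : K + 1 ≤ I.card) : ∃ x' y' : Fin K → V, IsSpider G u x' y' := by
  classical
  have hone : (I.filter fun i => y i = u).card ≤ 1 := Finset.card_le_one.mpr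
    fun a ha b hb => h.injective_right ((Finset.mem_filter.mp ha).2.trans
      (Finset.mem_filter.mp hb).2.symm)
  have := Finset.card_filter_add_card_filter_not (s := I) (fun i => y i = u)
  obtain ⟨e, he⟩ := Finset.exists_orderEmbedding_fin_mem (q := K)
    (s := I.filter fun i => ¬ y i = u) (by omega)
  exact ⟨x ∘ e, y ∘ e, h.comp e.injective, fun j => hu _ (Finset.mem_filter.mp (he j)).1,
    fun j => Ne.symm (Finset.mem_filter.mp (he j)).2⟩

theorem Connected.exists_isSpider_of_dist_eq (hc : G.Connected) (r : V) (K d : ℕ) {q : ℕ}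
    {x y : Fin q → V} (h : IsDisjointEdges G x y) (hd : ∀ i, G.dist r (x i) = d)
    (hq : K ^ d < q) : ∃ (u : V) (x' y' : Fin K → V), IsSpider G u x' y' := by
  classical
  induction d generalizing q with
  | zero =>
    refine absurd (Fintype.card_le_one_iff.mpr fun a b => h.injective_left ?_) (by simpa using hq)
    rw [← hc.dist_eq_zero_iff.mp (hd a), ← hc.dist_eq_zero_iff.mp (hd b)]
  | succ d ih =>
    choose P hPx hPd using fun i => exists_adj_dist_eq_of_dist_eq_succ (hd i)
    by_cases hfiber : ∃ u, K + 1 ≤ (Finset.univ.filter fun i => P i = u).card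
    · obtain ⟨u, hu⟩ := hfiber
      refine ⟨u, h.exists_isSpider_of_adj (fun i hi => ?_) hu⟩
      exact (Finset.mem_filter.mp hi).2 ▸ hPx i
    push Not at hfiber
    -- each parent is shared by at most `K` edges, so more than `K ^ d` parents occur
    have himage : K ^ d + 1 ≤ (Finset.univ.image P).card := by
      have := Finset.card_le_mul_card_image (f := P) Finset.univ K fun b _ => by
        have := hfiber b
        omega
      rw [Finset.card_univ, Fintype.card_fin] at this
      rw [pow_succ'] at hq
      exact Nat.lt_of_mul_lt_mul_left (hq.trans_le this)
    obtain ⟨e, he⟩ := exists_fin_injective_comp_of_le_card_image P himage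
    refine ih ⟨he, h.injective_left.comp he.of_comp, fun i j hij => ?_, fun i => hPx (e i)⟩
      (fun i => hPd (e i)) (Nat.lt_succ_self _)
    have := hPd (e i)
    rw [show P (e i) = x (e j) from hij, hd] at this
    omega

def IsAdjHomogeneous (G : SimpleGraph V) {t : ℕ} (f f' : Fin t → V) : Prop :=
  (∀ a b, a < b → G.Adj (f a) (f' b)) ∨ ∀ a b, a < b → ¬ G.Adj (f a) (f' b)

theorem isAdjHomogeneous_of_decide_eq {t : ℕ} {f f' : Fin t → V} [DecidableRel G.Adj] {β : Bool}
    (h : ∀ a b, a < b → decide (G.Adj (f a) (f' b)) = β) : IsAdjHomogeneous G f f' := by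
  cases β
  · exact Or.inr fun a b hab => by simpa using h a b hab
  · exact Or.inl fun a b hab => by simpa using h a b hab

theorem IsSpider.exists_isAdjHomogeneous {m t : ℕ} {u : V} {x y : Fin m → V}
    (h : IsSpider G u x y) (hm : 2 * 16 ^ (16 * t) ≤ m) :
    ∃ x' y' : Fin t → V, IsSpider G u x' y' ∧ IsAdjHomogeneous G x' x' ∧
      IsAdjHomogeneous G x' y' ∧ IsAdjHomogeneous G y' x' ∧ IsAdjHomogeneous G y' y' ∧
      ((∀ a, G.Adj u (y' a)) ∨ ∀ a, ¬ G.Adj u (y' a)) := by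
  classical
  -- the factor `2` pays for whether `u` sees `y i`, and `16 ^ (16 * t)` for Ramsey's theorem
  -- with the `16` possible adjacency patterns between two legs
  obtain ⟨β, -, e₀, he₀⟩ := Fin.exists_orderEmbedding_comp_eq_of_card_mul_le
    (fun i => decide (G.Adj u (y i))) Finset.univ_nonempty (fun _ => Finset.mem_univ _)
    (q := 16 ^ (16 * t)) (by simpa using hm)
  let colour (i j : Fin (16 ^ (16 * t))) : Bool × Bool × Bool × Bool :=
    (G.Adj (x (e₀ i)) (x (e₀ j)), G.Adj (x (e₀ i)) (y (e₀ j)),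
      G.Adj (y (e₀ i)) (x (e₀ j)), G.Adj (y (e₀ i)) (y (e₀ j)))
  obtain ⟨e₁, k, he₁, hk⟩ := exists_monochromatic_of_pow_le_card (by simp) colour t (by simp)
  refine ⟨x ∘ e₀ ∘ e₁, y ∘ e₀ ∘ e₁, h.comp (e₀.injective.comp he₁),
    isAdjHomogeneous_of_decide_eq fun a b hab => congrArg (·.1) (hk a b hab),
    isAdjHomogeneous_of_decide_eq fun a b hab => congrArg (·.2.1) (hk a b hab),
    isAdjHomogeneous_of_decide_eq fun a b hab => congrArg (·.2.2.1) (hk a b hab),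
    isAdjHomogeneous_of_decide_eq fun a b hab => congrArg (·.2.2.2) (hk a b hab), ?_⟩
  cases β
  · exact Or.inr fun a => by simpa using he₀ (e₁ a)
  · exact Or.inl fun a => by simpa using he₀ (e₁ a)

theorem IsSpider.sgraph2_isIndContained_or_fgraph_isIndContained {n : ℕ} {u : V}
    {x y : Fin n → V} (h : IsSpider G u x y) (hxx : ∀ a b, ¬ G.Adj (x a) (x b))
    (hyy : ∀ a b, ¬ G.Adj (y a) (y b)) (hxy : ∀ a b, G.Adj (x a) (y b) ↔ a = b)
    (huy : (∀ a, G.Adj u (y a)) ∨ ∀ a, ¬ G.Adj u (y a)) : Sgraph2 n ⊴ G ∨ Fgraph n ⊴ G := by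
  have hinj : Function.Injective (Sum.elim (fun _ : Unit => u) (Sum.elim x y)) :=
    (Function.injective_of_subsingleton _).sumElim
      (h.injective_left.sumElim h.injective_right h.left_ne_right)
      (by rintro - (a | a); exacts [(h.adj_center a).ne, h.center_ne_right a])
  have hyx (a b) : G.Adj (y a) (x b) ↔ b = a := G.adj_comm _ _ |>.trans (hxy b a)
  rcases huy with huy | huy
  · refine Or.inr (isIndContained_of_injective _ hinj ?_)
    rintro (- | a | a) (- | b | b) <;>
      simp [Fgraph, hxx, hyy, hxy, hyx, h.adj_center, (h.adj_center _).symm, huy, (huy _).symm]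
  · refine Or.inl (isIndContained_of_injective _ hinj ?_)
    rintro (- | a | a) (- | b | b) <;>
      simp [Sgraph2, hxx, hyy, hxy, hyx, h.adj_center, (h.adj_center _).symm, huy,
        fun a => mt (G.adj_symm (u := y a) (v := u)) (huy a)]

theorem IsSpider.isIndContained_of_isAdjHomogeneous {n : ℕ} {u : V} {x y : Fin (n + n) → V}
    (h : IsSpider G u x y) (hxx : IsAdjHomogeneous G x x) (hxy : IsAdjHomogeneous G x y)
    (hyx : IsAdjHomogeneous G y x) (hyy : IsAdjHomogeneous G y y)
    (huy : (∀ a, G.Adj u (y a)) ∨ ∀ a, ¬ G.Adj u (y a)) :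
    (⊤ : SimpleGraph (Fin n)) ⊴ G ∨ completeBipartiteGraph (Fin n) (Fin n) ⊴ G ∨
      Sgraph2 n ⊴ G ∨ Fgraph n ⊴ G := by
  have hmono := Fin.strictMono_castAdd (n := n) n
  -- the first `n` legs lie below the last `n`: this turns a half graph into `K_{n,n}`
  have hlow (a b : Fin n) : Fin.castAdd n a < Fin.natAdd n b := Fin.lt_def.mpr (by simp; omega)
  rcases hxx with hxx | hxx
  · exact Or.inl (top_isIndContained_of_forall_lt_adj fun a b hab => hxx _ _ (hmono hab))
  rcases hyy with hyy | hyy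
  · exact Or.inl (top_isIndContained_of_forall_lt_adj fun a b hab => hyy _ _ (hmono hab))
  replace hxx := forall_not_adj_of_forall_lt hxx
  replace hyy := forall_not_adj_of_forall_lt hyy
  have hnatAdd := Fin.natAdd_injective n n
  rcases hxy with hxy | hxy
  · exact Or.inr <| Or.inl <| completeBipartiteGraph_isIndContained
      (h.injective_left.comp hmono.injective) (h.injective_right.comp hnatAdd)
      (fun _ _ => hxx _ _) (fun _ _ => hyy _ _) fun a b => hxy _ _ (hlow a b)
  rcases hyx with hyx | hyx
  · exact Or.inr <| Or.inl <| completeBipartiteGraph_isIndContained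
      (h.injective_right.comp hmono.injective) (h.injective_left.comp hnatAdd)
      (fun _ _ => hyy _ _) (fun _ _ => hxx _ _) fun a b => hyx _ _ (hlow a b)
  have hmatching (a b : Fin (n + n)) : G.Adj (x a) (y b) ↔ a = b := by
    refine ⟨fun hadj => ?_, fun hab => hab ▸ h.adj a⟩
    rcases lt_trichotomy a b with hab | hab | hab
    exacts [absurd hadj (hxy a b hab), hab, absurd hadj.symm (hyx b a hab)]
  refine Or.inr <| Or.inr <|
    (h.comp hmono.injective).sgraph2_isIndContained_or_fgraph_isIndContained
      (fun _ _ => hxx _ _) (fun _ _ => hyy _ _)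
      (fun a b => (hmatching _ _).trans hmono.injective.eq_iff)
      (huy.imp (fun huy _ => huy _) fun huy _ => huy _)

end SimpleGraph

theorem stmt6_general (n : ℕ) :
    ∃ N : ℕ, ∀ (V : Type) (_ : Fintype V) (G : SimpleGraph V),
      G.Connected → N ≤ coverNum G →
        HasInducedCopy G (SimpleGraph.pathGraph n) ∨
        HasInducedCopy G (⊤ : SimpleGraph (Fin n)) ∨
        HasInducedCopy G (completeBipartiteGraph (Fin n) (Fin n)) ∨
        HasInducedCopy G (Sgraph2 n) ∨
        HasInducedCopy G (Fgraph n) := by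
  classical
  set K := 2 * 16 ^ (16 * (n + n))
  refine ⟨2 * ((n - 1) * K ^ n), fun V _ G hconn hcover => ?_⟩
  simp only [hasInducedCopy_iff_isIndContained]
  by_cases hdiam : ∃ x y, n - 1 ≤ G.dist x y
  · obtain ⟨x, y, hxy⟩ := hdiam
    exact Or.inl (pathGraph_isIndContained_of_le_dist (hconn.preconnected x y) hxy)
  push Not at hdiam
  obtain ⟨r⟩ := hconn.nonempty
  obtain ⟨x, y, hxy⟩ := exists_isDisjointEdges_of_le_coverNum _ hcover
  -- all edges start within distance `n - 2` of `r`, so `K ^ n` of them start at a common distance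
  obtain ⟨d, hd, e, he⟩ := Fin.exists_orderEmbedding_comp_eq_of_card_mul_le
    (fun i => G.dist r (x i)) (t := Finset.range (n - 1))
    (Finset.nonempty_range_iff.mpr (by have := hdiam r r; omega))
    (fun i => Finset.mem_range.mpr (hdiam r (x i))) (q := K ^ n) (by rw [Finset.card_range])
  have hK : 2 ≤ K := Nat.le_mul_of_pos_right 2 (by positivity)
  obtain ⟨u, x', y', hspider⟩ := hconn.exists_isSpider_of_dist_eq r K d (hxy.comp e.injective) he
    (Nat.pow_lt_pow_right hK (by have := Finset.mem_range.mp hd; omega))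
  obtain ⟨x'', y'', hspider', hxx, hxy, hyx, hyy, huy⟩ := hspider.exists_isAdjHomogeneous le_rfl
  exact Or.inr (hspider'.isIndContained_of_isAdjHomogeneous hxx hxy hyx hyy huy)

theorem stmt6 (n : ℕ) (hn : 1 ≤ n) :
    ∃ N : ℕ, ∀ (V : Type) (_ : Fintype V) (G : SimpleGraph V),
      G.Connected → N ≤ coverNum G →
        HasInducedCopy G (SimpleGraph.pathGraph n) ∨
        HasInducedCopy G (⊤ : SimpleGraph (Fin n)) ∨
        HasInducedCopy G (completeBipartiteGraph (Fin n) (Fin n)) ∨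
        HasInducedCopy G (Sgraph2 n) ∨
        HasInducedCopy G (Fgraph n) :=
  stmt6_general n
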